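/- arXiv:2403.11433 — 4 statements merged into one kernel-verified Lean document; each statement's English description precedes it below -/
import Mathlib

section
/- Let M be a positive semidefinite d×d matrix with M ≤ I, and for ε ∈ [0, 1/10] define B₊ = √((1−2ε²)/2)·I + ε·M, B₋ = √((1−2ε²)/2)·I − ε·M, and B₀ = √2·ε·(I − M²)^{1/2}. Then F₊ = B₊†B₊, F₋ = B₋†B₋, F₀ = B₀†B₀ are positive semidefinite and F₊ + F₋ + F₀ = I, i.e., {F₊, F₋, F₀} is a POVM. -/
/-!
Every `Bᴴ * B` is positive semidefinite, so only the sum needs work. With `a² = (1 - 2ε²)/2`,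
the cross terms `± aε M` of `F₊` and `F₋` cancel, leaving `2a² I + 2ε² M²`, while
`F₀ = 2ε² (I - M²)` because the square root of `I - M²` is Hermitian and squares to it.
The sum is therefore `(2a² + 2ε²) I = I`.
-/

open Matrix ComplexOrder

/-- The square root of a positive semidefinite matrix (removed from Mathlib; old definition). -/
noncomputable def Matrix.PosSemidef.sqrt {n 𝕜 : Type*} [Fintype n] [RCLike 𝕜] [DecidableEq n]
    {A : Matrix n n 𝕜} (hA : A.PosSemidef) : Matrix n n 𝕜 :=
  hA.1.eigenvectorUnitary.1 * diagonal ((↑) ∘ (√·) ∘ hA.1.eigenvalues) *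
    (star hA.1.eigenvectorUnitary : Matrix n n 𝕜)

namespace Matrix

section Sqrt

variable {n 𝕜 : Type*} [Fintype n] [RCLike 𝕜] [DecidableEq n] {A : Matrix n n 𝕜}

theorem PosSemidef.sqrt_isHermitian (hA : A.PosSemidef) : hA.sqrt.IsHermitian := by
  simp only [IsHermitian, PosSemidef.sqrt, conjTranspose_mul, diagonal_conjTranspose,
    Matrix.mul_assoc, star_eq_conjTranspose, conjTranspose_conjTranspose]
  congr 3
  funext i
  simp

theorem PosSemidef.sqrt_mul_self (hA : A.PosSemidef) : hA.sqrt * hA.sqrt = A := by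
  conv_rhs => rw [hA.1.spectral_theorem, Unitary.conjStarAlgAut_apply]
  simp only [PosSemidef.sqrt, Matrix.mul_assoc]
  congr 1
  rw [← Matrix.mul_assoc (star _ : Matrix n n 𝕜), Unitary.coe_star_mul_self, Matrix.one_mul,
    ← Matrix.mul_assoc, diagonal_mul_diagonal]
  congr 2
  funext i
  simp only [Function.comp]
  rw [← RCLike.ofReal_mul, Real.mul_self_sqrt (hA.eigenvalues_nonneg i)]

end Sqrt

theorem IsHermitian.conjTranspose_mul_self_add_add_eq_one {n R : Type*} [Fintype n]
    [DecidableEq n] [CommRing R] [StarRing R] {M S : Matrix n n R} {a b c : R}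
    (hM : M.IsHermitian) (hS : S.IsHermitian) (hSM : S * S = 1 - M * M)
    (ha : IsSelfAdjoint a) (hb : IsSelfAdjoint b) (hc : IsSelfAdjoint c)
    (hsum : 2 * a * a + b * b = 1) (hbc : b * b = 2 * c * c) :
    (a • 1 + c • M)ᴴ * (a • 1 + c • M) + (a • 1 - c • M)ᴴ * (a • 1 - c • M) +
      (b • S)ᴴ * (b • S) = 1 := by
  simp only [conjTranspose_add, conjTranspose_sub, conjTranspose_smul, conjTranspose_one,
    hM.eq, hS.eq, ha.star_eq, hb.star_eq, hc.star_eq, add_mul, mul_add, sub_mul, mul_sub,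
    smul_mul_smul_comm, Matrix.one_mul, Matrix.mul_one, hSM, hbc]
  conv_rhs => rw [← one_smul R (1 : Matrix n n R), ← hsum, hbc]
  module

end Matrix

theorem gentle_three_outcome_povm_general
    (d : ℕ) (M : Matrix (Fin d) (Fin d) ℂ) (ε : ℝ)
    (hM : M.PosSemidef)
    (hIM : ((1 : Matrix (Fin d) (Fin d) ℂ) - M * M).PosSemidef)
    (hε0 : 0 ≤ ε) (hε : ε ≤ 1 / 10) :
    let Bp : Matrix (Fin d) (Fin d) ℂ :=
      (Real.sqrt ((1 - 2 * ε ^ 2) / 2) : ℂ) • (1 : Matrix (Fin d) (Fin d) ℂ) + (ε : ℂ) • M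
    let Bm : Matrix (Fin d) (Fin d) ℂ :=
      (Real.sqrt ((1 - 2 * ε ^ 2) / 2) : ℂ) • (1 : Matrix (Fin d) (Fin d) ℂ) - (ε : ℂ) • M
    let B0 : Matrix (Fin d) (Fin d) ℂ :=
      ((Real.sqrt 2 * ε : ℝ) : ℂ) • hIM.sqrt
    (Bpᴴ * Bp).PosSemidef ∧ (Bmᴴ * Bm).PosSemidef ∧ (B0ᴴ * B0).PosSemidef ∧
      Bpᴴ * Bp + Bmᴴ * Bm + B0ᴴ * B0 = 1 := by
  intro Bp Bm B0
  refine ⟨posSemidef_conjTranspose_mul_self _, posSemidef_conjTranspose_mul_self _,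
    posSemidef_conjTranspose_mul_self _, ?_⟩
  have hsqrt2 : √2 * √2 = 2 := Real.mul_self_sqrt zero_le_two
  have ha : √((1 - 2 * ε ^ 2) / 2) * √((1 - 2 * ε ^ 2) / 2) = (1 - 2 * ε ^ 2) / 2 :=
    Real.mul_self_sqrt (by nlinarith)
  refine hM.1.conjTranspose_mul_self_add_add_eq_one hIM.sqrt_isHermitian hIM.sqrt_mul_self
    (Complex.conj_ofReal _) (Complex.conj_ofReal _) (Complex.conj_ofReal _) ?_ ?_
  · exact_mod_cast (by linear_combination 2 * ha + ε ^ 2 * hsqrt2 :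
      2 * √((1 - 2 * ε ^ 2) / 2) * √((1 - 2 * ε ^ 2) / 2) + √2 * ε * (√2 * ε) = 1)
  · exact_mod_cast (by linear_combination ε ^ 2 * hsqrt2 : √2 * ε * (√2 * ε) = 2 * ε * ε)

theorem gentle_three_outcome_povm
    (d : ℕ) (M : Matrix (Fin d) (Fin d) ℂ) (ε : ℝ)
    (hM : M.PosSemidef) (hMle : ((1 : Matrix (Fin d) (Fin d) ℂ) - M).PosSemidef)
    (hIM : ((1 : Matrix (Fin d) (Fin d) ℂ) - M * M).PosSemidef)
    (hε0 : 0 ≤ ε) (hε : ε ≤ 1 / 10) :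
    let Bp : Matrix (Fin d) (Fin d) ℂ :=
      (Real.sqrt ((1 - 2 * ε ^ 2) / 2) : ℂ) • (1 : Matrix (Fin d) (Fin d) ℂ) + (ε : ℂ) • M
    let Bm : Matrix (Fin d) (Fin d) ℂ :=
      (Real.sqrt ((1 - 2 * ε ^ 2) / 2) : ℂ) • (1 : Matrix (Fin d) (Fin d) ℂ) - (ε : ℂ) • M
    let B0 : Matrix (Fin d) (Fin d) ℂ :=
      ((Real.sqrt 2 * ε : ℝ) : ℂ) • hIM.sqrt
    (Bpᴴ * Bp).PosSemidef ∧ (Bmᴴ * Bm).PosSemidef ∧ (B0ᴴ * B0).PosSemidef ∧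
      Bpᴴ * Bp + Bmᴴ * Bm + B0ᴴ * B0 = 1 :=
  gentle_three_outcome_povm_general d M ε hM hIM hε0 hε
end

section
/- With the notation of the three-outcome POVM construction: for a density matrix ρ and M positive semidefinite with M ≤ I, Tr(B₊ρB₊†) + Tr(B₋ρB₋†) = 1 − 2ε²(1 − Tr(M²ρ)). In particular, if ε² ≤ δ/(2(1 − Tr(M²ρ))) (when Tr(M²ρ) < 1), then Tr(B₊ρB₊†) + Tr(B₋ρB₋†) ≥ 1 − δ. -/
open Matrix ComplexOrder

theorem gentle_detection_probability
    (d : ℕ) (M ρ : Matrix (Fin d) (Fin d) ℂ) (ε δ : ℝ)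
    (hM : M.PosSemidef) (hMle : ((1 : Matrix (Fin d) (Fin d) ℂ) - M).PosSemidef)
    (hρ : ρ.PosSemidef) (hρt : ρ.trace = 1)
    (hε0 : 0 ≤ ε) (hε : ε ≤ 1 / Real.sqrt 2)
    (hδ0 : 0 ≤ δ) (hδ1 : δ ≤ 1) :
    let Bp : Matrix (Fin d) (Fin d) ℂ :=
      (Real.sqrt ((1 - 2 * ε ^ 2) / 2) : ℂ) • (1 : Matrix (Fin d) (Fin d) ℂ) + (ε : ℂ) • M
    let Bm : Matrix (Fin d) (Fin d) ℂ :=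
      (Real.sqrt ((1 - 2 * ε ^ 2) / 2) : ℂ) • (1 : Matrix (Fin d) (Fin d) ℂ) - (ε : ℂ) • M
    Matrix.trace (Bp * ρ * Bpᴴ) + Matrix.trace (Bm * ρ * Bmᴴ)
        = 1 - 2 * (ε : ℂ) ^ 2 * (1 - Matrix.trace (M * M * ρ))
    ∧ ((Matrix.trace (M * M * ρ)).re < 1 →
        ε ^ 2 ≤ δ / (2 * (1 - (Matrix.trace (M * M * ρ)).re)) →
        1 - δ ≤ (Matrix.trace (Bp * ρ * Bpᴴ) + Matrix.trace (Bm * ρ * Bmᴴ)).re) := by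
  intro Bp Bm
  have hMher : Mᴴ = M := hM.1
  set c : ℝ := Real.sqrt ((1 - 2 * ε ^ 2) / 2) with hc
  have hhalf : ε ^ 2 ≤ 1 / 2 := by
    have h2 : (0:ℝ) < Real.sqrt 2 := Real.sqrt_pos.mpr (by norm_num)
    have := pow_le_pow_left₀ hε0 hε 2
    have hs : (1 / Real.sqrt 2) ^ 2 = 1 / 2 := by
      rw [div_pow, Real.sq_sqrt (by norm_num : (0:ℝ) ≤ 2)]; norm_num
    linarith [hs ▸ this]
  have hc2 : ((c : ℂ)) ^ 2 = ((1 - 2 * ε ^ 2) / 2 : ℝ) := by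
    rw [← Complex.ofReal_pow, hc, Real.sq_sqrt (by linarith : (0:ℝ) ≤ (1 - 2 * ε ^ 2) / 2)]
  have hBpH : Bpᴴ = (c : ℂ) • (1 : Matrix (Fin d) (Fin d) ℂ) + (ε : ℂ) • M := by
    show ((c : ℂ) • (1 : Matrix (Fin d) (Fin d) ℂ) + (ε : ℂ) • M)ᴴ = _
    rw [conjTranspose_add, conjTranspose_smul, conjTranspose_smul, conjTranspose_one, hMher,
      Complex.star_def, Complex.conj_ofReal, Complex.conj_ofReal]
  have hBmH : Bmᴴ = (c : ℂ) • (1 : Matrix (Fin d) (Fin d) ℂ) - (ε : ℂ) • M := by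
    show ((c : ℂ) • (1 : Matrix (Fin d) (Fin d) ℂ) - (ε : ℂ) • M)ᴴ = _
    rw [conjTranspose_sub, conjTranspose_smul, conjTranspose_smul, conjTranspose_one, hMher,
      Complex.star_def, Complex.conj_ofReal, Complex.conj_ofReal]
  have key : Bp * ρ * Bpᴴ + Bm * ρ * Bmᴴ
      = (2 * (c:ℂ)^2) • ρ + (2 * (ε:ℂ)^2) • (M * ρ * M) := by
    rw [hBpH, hBmH]
    show ((c : ℂ) • (1 : Matrix (Fin d) (Fin d) ℂ) + (ε : ℂ) • M) * ρ *
        ((c : ℂ) • (1 : Matrix (Fin d) (Fin d) ℂ) + (ε : ℂ) • M)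
      + ((c : ℂ) • (1 : Matrix (Fin d) (Fin d) ℂ) - (ε : ℂ) • M) * ρ *
        ((c : ℂ) • (1 : Matrix (Fin d) (Fin d) ℂ) - (ε : ℂ) • M) = _
    simp only [add_mul, mul_add, sub_mul, mul_sub, smul_mul_assoc, mul_smul_comm,
      one_mul, mul_one, smul_smul]
    module
  have hTcyc : Matrix.trace (M * ρ * M) = Matrix.trace (M * M * ρ) := by
    rw [Matrix.trace_mul_cycle]
  have h1 : Matrix.trace (Bp * ρ * Bpᴴ) + Matrix.trace (Bm * ρ * Bmᴴ)
      = 1 - 2 * (ε : ℂ) ^ 2 * (1 - Matrix.trace (M * M * ρ)) := by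
    rw [← Matrix.trace_add, key, Matrix.trace_add, Matrix.trace_smul, Matrix.trace_smul,
      hρt, hTcyc, smul_eq_mul, smul_eq_mul, hc2]
    push_cast
    ring
  refine ⟨h1, fun ht hε2 => ?_⟩
  rw [h1]
  have hre : (1 - 2 * (ε : ℂ) ^ 2 * (1 - Matrix.trace (M * M * ρ))).re
      = 1 - 2 * ε ^ 2 * (1 - (Matrix.trace (M * M * ρ)).re) := by
    simp [Complex.sub_re, Complex.mul_re, ← Complex.ofReal_pow, Complex.ofReal_re, Complex.ofReal_im]
  rw [hre]
  set t := (Matrix.trace (M * M * ρ)).re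
  have hpos : (0:ℝ) < 2 * (1 - t) := by linarith
  have := (le_div_iff₀ hpos).mp hε2
  nlinarith
end

section
/- Let ρ, σ be density matrices with ρ ≠ σ, and write ρ − σ = L₊ − L₋ where L₊ and L₋ are positive semidefinite, L₊L₋ = L₋L₊ = 0 (the Jordan decomposition of the Hermitian matrix ρ − σ). If L₊ ≠ 0, then for B₊ = √((1−2ε²)/2)·I + ε·L₊ with 0 < ε ≤ 1/10, one has Tr(B₊ρB₊†) − Tr(B₊σB₊†) = 2ε√((1−2ε²)/2)·Tr(L₊²) + ε²·Tr(L₊³) > 0. -/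
open Matrix ComplexOrder

namespace Matrix

variable {n : Type*} [Fintype n]

theorem IsHermitian.trace_mul_self_pos {R : Type*} [CommRing R] [PartialOrder R] [StarRing R]
    [StarOrderedRing R] [NoZeroDivisors R] {A : Matrix n n R} (hA : A.IsHermitian)
    (h : A ≠ 0) : 0 < (A * A).trace := by
  nth_rewrite 1 [← hA.eq]
  refine (posSemidef_conjTranspose_mul_self A).trace_nonneg.lt_of_ne' ?_
  exact trace_conjTranspose_mul_self_eq_zero_iff.not.mpr h

/-- Only the cross terms and the `e²` term survive: `P ⟂ N` kills every product with `N`,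
and `tr (P - N) = 0` kills the `c²` term. -/
theorem trace_conj_sub_of_mul_eq_zero {R : Type*} [CommRing R] [DecidableEq n] (c e : R)
    {P N : Matrix n n R} (htr : (P - N).trace = 0) (hPN : P * N = 0) (hNP : N * P = 0) :
    ((c • 1 + e • P) * (P - N) * (c • 1 + e • P)).trace
      = 2 * c * e * (P * P).trace + e ^ 2 * (P * P * P).trace := by
  have hleft : (P - N) * P = P * P := by rw [sub_mul, hNP, sub_zero]
  have hright : P * (P - N) = P * P := by rw [mul_sub, hPN, sub_zero]
  simp only [add_mul, mul_add, Matrix.smul_mul, Matrix.mul_smul, one_mul, mul_one, hleft, hright,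
    trace_add, trace_smul, htr, smul_eq_mul]
  ring

end Matrix

theorem jordan_positive_part_distinguishes_general
    (d : ℕ) (ρ σ Lp Lm : Matrix (Fin d) (Fin d) ℂ) (ε : ℝ)
    (hρt : ρ.trace = 1)
    (hσt : σ.trace = 1)
    (hdec : ρ - σ = Lp - Lm)
    (hLp : Lp.PosSemidef)
    (horth : Lp * Lm = 0) (horth' : Lm * Lp = 0)
    (hLpne : Lp ≠ 0)
    (hε0 : 0 < ε) (hε : ε ≤ 1 / 10) :
    let Bp : Matrix (Fin d) (Fin d) ℂ :=
      (Real.sqrt ((1 - 2 * ε ^ 2) / 2) : ℂ) • (1 : Matrix (Fin d) (Fin d) ℂ) + (ε : ℂ) • Lp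
    Matrix.trace (Bp * ρ * Bpᴴ) - Matrix.trace (Bp * σ * Bpᴴ)
        = 2 * (ε : ℂ) * (Real.sqrt ((1 - 2 * ε ^ 2) / 2) : ℂ) * Matrix.trace (Lp * Lp)
          + (ε : ℂ) ^ 2 * Matrix.trace (Lp * Lp * Lp)
    ∧ 0 < (Matrix.trace (Bp * ρ * Bpᴴ) - Matrix.trace (Bp * σ * Bpᴴ)).re := by
  intro Bp
  set c : ℝ := Real.sqrt ((1 - 2 * ε ^ 2) / 2)
  have hBp : Bpᴴ = Bp := by
    simp only [Bp, conjTranspose_add, conjTranspose_smul, conjTranspose_one, hLp.isHermitian.eq,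
      RCLike.star_def, Complex.conj_ofReal]
  have htr : (Lp - Lm).trace = 0 := by rw [← hdec, trace_sub, hρt, hσt, sub_self]
  have hformula : (Bp * ρ * Bpᴴ).trace - (Bp * σ * Bpᴴ).trace
      = 2 * (ε : ℂ) * c * (Lp * Lp).trace + (ε : ℂ) ^ 2 * (Lp * Lp * Lp).trace := by
    rw [← trace_sub, ← sub_mul, ← mul_sub, hdec, hBp,
      trace_conj_sub_of_mul_eq_zero _ _ htr horth horth']
    ring
  refine ⟨hformula, ?_⟩
  have hc : 0 < c := Real.sqrt_pos.mpr (by nlinarith)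
  have hsq := hLp.isHermitian.trace_mul_self_pos hLpne
  have hcube : 0 ≤ (Lp * Lp * Lp).trace := by
    simpa only [pow_succ, pow_zero, one_mul] using (hLp.pow 3).trace_nonneg
  have hpos : 0 < 2 * (ε : ℂ) * c * (Lp * Lp).trace + (ε : ℂ) ^ 2 * (Lp * Lp * Lp).trace :=
    add_pos_of_pos_of_nonneg
      (mul_pos (by norm_cast; positivity) hsq) (mul_nonneg (by norm_cast; positivity) hcube)
  rw [hformula]
  exact (Complex.pos_iff.mp hpos).1

theorem jordan_positive_part_distinguishes
    (d : ℕ) (ρ σ Lp Lm : Matrix (Fin d) (Fin d) ℂ) (ε : ℝ)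
    (hρ : ρ.PosSemidef) (hρt : ρ.trace = 1)
    (hσ : σ.PosSemidef) (hσt : σ.trace = 1)
    (hne : ρ ≠ σ)
    (hdec : ρ - σ = Lp - Lm)
    (hLp : Lp.PosSemidef) (hLm : Lm.PosSemidef)
    (horth : Lp * Lm = 0) (horth' : Lm * Lp = 0)
    (hLpne : Lp ≠ 0)
    (hε0 : 0 < ε) (hε : ε ≤ 1 / 10) :
    let Bp : Matrix (Fin d) (Fin d) ℂ :=
      (Real.sqrt ((1 - 2 * ε ^ 2) / 2) : ℂ) • (1 : Matrix (Fin d) (Fin d) ℂ) + (ε : ℂ) • Lp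
    Matrix.trace (Bp * ρ * Bpᴴ) - Matrix.trace (Bp * σ * Bpᴴ)
        = 2 * (ε : ℂ) * (Real.sqrt ((1 - 2 * ε ^ 2) / 2) : ℂ) * Matrix.trace (Lp * Lp)
          + (ε : ℂ) ^ 2 * Matrix.trace (Lp * Lp * Lp)
    ∧ 0 < (Matrix.trace (Bp * ρ * Bpᴴ) - Matrix.trace (Bp * σ * Bpᴴ)).re :=
  jordan_positive_part_distinguishes_general d ρ σ Lp Lm ε hρt hσt hdec hLp horth horth' hLpne hε0
    hε
end

section
/- Let {ρ^x}_{x∈X} be a finite family of d×d density matrices that pairwise commute: [ρ^x, ρ^{x'}] = 0 for all x, x'. Then there exists a single orthonormal basis simultaneously diagonalizing all ρ^x, and the projective measurement {P_i = |i⟩⟨i|} in this basis achieves ∑_i max_x Tr(ρ^x P_i) = sup over all POVMs {F_y} of ∑_y max_x Tr(ρ^x F_y). -/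
/-!
Commuting Hermitian matrices have a common orthonormal eigenbasis, the columns of a unitary `U`,
so `ρ x = U * diagonal (λ x) * Uᴴ`. For any POVM `F`, `Tr (ρ x * F y) = ∑ i, λ x i * G y i` with
`G y i = (Uᴴ * F y * U) i i`, a column-stochastic array: `G y i ≥ 0` and `∑ y, G y i = 1`.
Hence `∑ y, maxₓ Tr (ρ x * F y) ≤ ∑ y, ∑ i, G y i * maxₓ λ x i = ∑ i, maxₓ λ x i`, and the
right-hand side is the value of the measurement in the eigenbasis, `Tr (ρ x * U Eᵢᵢ Uᴴ) = λ x i`.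
-/

open Matrix Finset ComplexOrder

theorem DirectSum.IsInternal.exists_orthonormalBasis_subordinate
    {𝕜 E ι κ : Type*} [RCLike 𝕜] [NormedAddCommGroup E] [InnerProductSpace 𝕜 E]
    [FiniteDimensional 𝕜 E] [DecidableEq ι] [Fintype κ] {V : ι → Submodule 𝕜 E} (hV : IsInternal V)
    (hV' : OrthogonalFamily 𝕜 (fun i => V i) fun i => (V i).subtypeₗᵢ)
    (hκ : Module.finrank 𝕜 E = Fintype.card κ) :
    ∃ (b : OrthonormalBasis κ 𝕜 E) (f : κ → ι), ∀ j, b j ∈ V (f j) := by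
  -- The subordinate basis needs a finite index set: keep only the nonzero `V i`.
  let := hV.submodule_iSupIndep.fintypeNeBotOfFiniteDimensional
  have hW := isInternal_ne_bot_iff.mpr hV
  have hW' := hV'.comp (Subtype.val_injective (p := fun i => V i ≠ ⊥))
  let e := Fintype.equivFin κ
  refine ⟨(hW.subordinateOrthonormalBasis hκ hW').reindex e.symm,
    fun j => (hW.subordinateOrthonormalBasisIndex hκ (e j) hW').val, fun j => ?_⟩
  rw [OrthonormalBasis.reindex_apply, Equiv.symm_symm]
  exact hW.subordinateOrthonormalBasis_subordinate hκ (e j) hW'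

open Module.End in
theorem LinearMap.IsSymmetric.exists_orthonormalBasis_eigenvectors_of_commute
    {𝕜 E X ι : Type*} [RCLike 𝕜] [NormedAddCommGroup E] [InnerProductSpace 𝕜 E]
    [FiniteDimensional 𝕜 E] [Fintype ι] {T : X → Module.End 𝕜 E}
    (hT : ∀ x, (T x).IsSymmetric) (hC : ∀ x y, Commute (T x) (T y))
    (hι : Module.finrank 𝕜 E = Fintype.card ι) :
    ∃ (b : OrthonormalBasis ι 𝕜 E) (μ : ι → X → 𝕜), ∀ j x, T x (b j) = μ j x • b j := by
  classical
  obtain ⟨b, μ, hb⟩ := (directSum_isInternal_of_pairwise_commute hT fun x y _ => hC x y)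
    |>.exists_orthonormalBasis_subordinate (orthogonalFamily_iInf_eigenspaces hT) hι
  exact ⟨b, μ, fun j x => mem_eigenspace_iff.mp ((Submodule.mem_iInf _).mp (hb j) x)⟩

theorem Matrix.exists_unitary_diagonalize_of_commute
    {𝕜 n X : Type*} [RCLike 𝕜] [Fintype n] [DecidableEq n] {A : X → Matrix n n 𝕜}
    (hA : ∀ x, (A x).IsHermitian) (hC : ∀ x y, Commute (A x) (A y)) :
    ∃ U ∈ unitaryGroup n 𝕜, ∃ D : X → n → 𝕜, ∀ x, A x = U * diagonal (D x) * Uᴴ := by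
  obtain ⟨b, μ, hb⟩ :=
    LinearMap.IsSymmetric.exists_orthonormalBasis_eigenvectors_of_commute
      (fun x => isSymmetric_toEuclideanLin_iff.mpr (hA x))
      (fun x y => (hC x y).map (toLpLinAlgEquiv 2)) finrank_euclideanSpace
  let U : Matrix n n 𝕜 := of fun i j => b j i
  have hU : U ∈ unitaryGroup n 𝕜 :=
    (EuclideanSpace.basisFun n 𝕜).toMatrix_orthonormalBasis_mem_unitary b
  refine ⟨U, hU, fun x j => μ j x, fun x => ?_⟩
  have hAU : A x * U = U * diagonal (fun j => μ j x) := by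
    ext i j
    rw [mul_diagonal]
    simpa [U, mul_apply, mulVec, dotProduct, mul_comm]
      using congrArg (fun v : EuclideanSpace 𝕜 n => v i) (hb j x)
  rw [← Matrix.mul_one (A x), ← mem_unitaryGroup_iff.mp hU, ← Matrix.mul_assoc, hAU]
  rfl

theorem Finset.sum_sup'_le_sum_sup'_of_stochastic {X Y ι : Type*} [Fintype Y] [Fintype ι]
    {s : Finset X} (hs : s.Nonempty) (a : X → ι → ℝ) {G : Y → ι → ℝ}
    (hG : ∀ y i, 0 ≤ G y i) (hG₁ : ∀ i, ∑ y, G y i = 1) :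
    ∑ y, s.sup' hs (fun x => ∑ i, a x i * G y i) ≤ ∑ i, s.sup' hs (fun x => a x i) :=
  calc ∑ y, s.sup' hs (fun x => ∑ i, a x i * G y i)
      ≤ ∑ y, ∑ i, s.sup' hs (fun x => a x i) * G y i :=
        sum_le_sum fun y _ => sup'_le _ _ fun x hx => sum_le_sum fun i _ =>
          mul_le_mul_of_nonneg_right (le_sup' (fun x => a x i) hx) (hG y i)
    _ = ∑ i, s.sup' hs (fun x => a x i) * ∑ y, G y i := by
        rw [sum_comm]
        simp_rw [mul_sum]
    _ = ∑ i, s.sup' hs (fun x => a x i) := by simp only [hG₁, mul_one]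

theorem Matrix.trace_mul_diagonal_mul_mul {R n : Type*} [CommSemiring R] [Fintype n]
    [DecidableEq n] (U V F : Matrix n n R) (D : n → R) :
    trace (U * diagonal D * V * F) = ∑ i, D i * (V * F * U) i i := by
  rw [Matrix.mul_assoc, Matrix.mul_assoc, trace_mul_comm, Matrix.mul_assoc]
  simp [trace, diagonal_mul]

theorem Matrix.PosSemidef.re_trace_conj_diagonal_mul {n : Type*} [Fintype n] [DecidableEq n]
    {F : Matrix n n ℂ} (hF : F.PosSemidef) (U : Matrix n n ℂ) (D : n → ℂ) :
    (trace (U * diagonal D * Uᴴ * F)).re = ∑ i, (D i).re * ((Uᴴ * F * U) i i).re := by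
  rw [trace_mul_diagonal_mul_mul, Complex.re_sum]
  refine sum_congr rfl fun i _ => ?_
  have hFi : (0 : ℂ) ≤ (Uᴴ * F * U) i i := (hF.conjTranspose_mul_mul_same U).diag_nonneg
  rw [Complex.mul_re, ← (Complex.nonneg_iff.mp hFi).2, mul_zero, sub_zero]

theorem Matrix.sum_mul_mul_diag_eq_one {R n Y : Type*} [Semiring R] [Fintype n] [DecidableEq n]
    [Fintype Y] {U V : Matrix n n R} (hVU : V * U = 1) {F : Y → Matrix n n R}
    (hF : ∑ y, F y = 1) (i : n) : ∑ y, (V * F y * U) i i = 1 := by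
  rw [← sum_apply, ← sum_mul, ← mul_sum, hF, Matrix.mul_one, hVU, one_apply_eq]

theorem Matrix.posSemidef_conj_single_one {n : Type*} [Fintype n] [DecidableEq n]
    (U : Matrix n n ℂ) (i : n) : (U * single i i 1 * Uᴴ).PosSemidef := by
  refine PosSemidef.mul_mul_conjTranspose_same ?_ U
  rw [← diagonal_single, posSemidef_diagonal_iff]
  intro j
  by_cases h : j = i <;> simp [h]

theorem Matrix.sum_conj_single_one {R n : Type*} [Semiring R] [Fintype n] [DecidableEq n]
    (U V : Matrix n n R) : ∑ i, U * single i i 1 * V = U * V := by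
  rw [← sum_mul, ← mul_sum, sum_single_one, Matrix.mul_one]

theorem Matrix.trace_conj_diagonal_mul_conj_single_one {R n : Type*} [CommSemiring R]
    [Fintype n] [DecidableEq n] {U V : Matrix n n R} (hVU : V * U = 1) (D : n → R) (i : n) :
    trace (U * diagonal D * V * (U * single i i 1 * V)) = D i := by
  rw [trace_mul_diagonal_mul_mul]
  simp [← Matrix.mul_assoc, hVU, Matrix.mul_assoc _ V U, single_apply]

theorem commuting_ensemble_projective_optimal
    (d : ℕ) (hd : 1 ≤ d) (X : Type) [Fintype X] [Nonempty X]
    (ρ : X → Matrix (Fin d) (Fin d) ℂ)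
    (hρ : ∀ x, (ρ x).PosSemidef ∧ (ρ x).trace = 1)
    (hcomm : ∀ x x', ρ x * ρ x' = ρ x' * ρ x) :
    ∃ U : Matrix (Fin d) (Fin d) ℂ, Uᴴ * U = 1 ∧ U * Uᴴ = 1 ∧
      (∀ x, ∃ D : Fin d → ℂ, Uᴴ * ρ x * U = Matrix.diagonal D) ∧
      IsGreatest
        {s : ℝ | ∃ (m : ℕ) (_ : 0 < m) (F : Fin m → Matrix (Fin d) (Fin d) ℂ),
          (∀ y, (F y).PosSemidef) ∧ (∑ y, F y = 1) ∧
          s = ∑ y, (Finset.univ.sup' Finset.univ_nonempty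
            (fun x => (Matrix.trace (ρ x * F y)).re))}
        (∑ i : Fin d, (Finset.univ.sup' Finset.univ_nonempty
          (fun x => (Matrix.trace (ρ x * (U * Matrix.single i i 1 * Uᴴ))).re))) := by
  obtain ⟨U, hU, D, hρD⟩ :=
    exists_unitary_diagonalize_of_commute (fun x => (hρ x).1.isHermitian) hcomm
  have hUU : Uᴴ * U = 1 := mem_unitaryGroup_iff'.mp hU
  have hUU' : U * Uᴴ = 1 := mem_unitaryGroup_iff.mp hU
  have hprojective : ∀ x i, (trace (ρ x * (U * single i i 1 * Uᴴ))).re = (D x i).re := by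
    intro x i
    rw [hρD x, trace_conj_diagonal_mul_conj_single_one hUU]
  refine ⟨U, hUU, hUU', fun x => ⟨D x, ?_⟩,
    ⟨d, hd, _, posSemidef_conj_single_one U, by rw [sum_conj_single_one, hUU'], rfl⟩, ?_⟩
  · rw [hρD x, ← Matrix.mul_assoc, ← Matrix.mul_assoc, hUU, Matrix.one_mul, Matrix.mul_assoc,
      hUU, Matrix.mul_one]
  rintro _ ⟨m, -, F, hF, hFsum, rfl⟩
  have hvalue : ∀ x y, (trace (ρ x * F y)).re = ∑ i, (D x i).re * ((Uᴴ * F y * U) i i).re := by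
    intro x y
    rw [hρD x, (hF y).re_trace_conj_diagonal_mul]
  simp only [hvalue, hprojective]
  refine sum_sup'_le_sum_sup'_of_stochastic _ _
    (fun y i => (Complex.nonneg_iff.mp ((hF y).conjTranspose_mul_mul_same U).diag_nonneg).1)
    fun i => ?_
  rw [← Complex.re_sum, sum_mul_mul_diag_eq_one hUU hFsum, Complex.one_re]
end
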